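/- arXiv:1205.0873 — 2 statements merged into one kernel-verified Lean document; each statement's English description precedes it below -/
import Mathlib

section
/- Let X be a ptolemaic metric space, let c : ℝ → X be a geodesic line with Busemann functions b⁺, b⁻ of its forward and backward rays, and let c' : ℝ → X be any geodesic line parallel to c. Then b⁺(c'(s)) + b⁻(c'(s)) = 0 for every s ∈ ℝ. -/
open Metric Set Filter Topology

/-!
On `c'(s)` the triangle inequality gives `b⁺ + b⁻ ≥ 0`, and symmetrically the Busemann
functions `b'^±` of `c'` satisfy `b'⁺ + b'⁻ ≥ 0` on `c(s)`. Conversely, the Ptolemy inequality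
for the quadruple `c(s), c'(u), c'(s), c(u)` reads, after dividing by `u → ∞`,
`b⁺(c'(s)) + b'⁺(c(s)) + 2s ≤ 0`, because `d(c(u), c'(u)) = o(u)`; likewise at `-∞`,
`b⁻(c'(s)) + b'⁻(c(s)) - 2s ≤ 0`. Adding the four inequalities forces `b⁺ + b⁻ = 0` on `c'`.
-/

/-- A metric space is ptolemaic if all quadruples satisfy the Ptolemy inequality. -/
def Ptolemaic (X : Type*) [MetricSpace X] : Prop :=
  ∀ x y z w : X, dist x y * dist z w ≤ dist x z * dist y w + dist x w * dist y z

/-- A unit-speed geodesic line: an isometric embedding of ℝ. -/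
def IsGeodesicLine {X : Type*} [MetricSpace X] (c : ℝ → X) : Prop :=
  ∀ s t : ℝ, dist (c s) (c t) = |s - t|

/-- Two lines are parallel if their distance is sublinear in both directions. -/
def ParallelLines {X : Type*} [MetricSpace X] (c₀ c₁ : ℝ → X) : Prop :=
  Filter.Tendsto (fun t => dist (c₀ t) (c₁ t) / |t|) Filter.atTop (nhds 0) ∧
  Filter.Tendsto (fun t => dist (c₀ t) (c₁ t) / |t|) Filter.atBot (nhds 0)

/-- `b` is the Busemann function of the ray `c`. -/
def IsBusemannOf {X : Type*} [MetricSpace X] (c : ℝ → X) (b : X → ℝ) : Prop :=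
  ∀ x : X, Filter.Tendsto (fun t => dist x (c t) - t) Filter.atTop (nhds (b x))

namespace IsGeodesicLine

variable {X : Type*} [MetricSpace X] {c : ℝ → X}

lemma comp_neg (hc : IsGeodesicLine c) : IsGeodesicLine (fun t => c (-t)) := by
  intro s t
  rw [hc, ← abs_neg, neg_sub_neg, neg_sub]

lemma antitone_dist_sub (hc : IsGeodesicLine c) (x : X) :
    Antitone (fun t => dist x (c t) - t) := by
  intro a b hab
  have hstep : dist (c a) (c b) = b - a := by rw [hc, abs_sub_comm, abs_of_nonneg (by linarith)]
  have := dist_triangle x (c a) (c b)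
  dsimp only
  linarith

lemma neg_dist_le_dist_sub (hc : IsGeodesicLine c) (x : X) (t : ℝ) :
    -dist x (c 0) ≤ dist x (c t) - t := by
  have hdist : dist (c 0) (c t) = |t| := by rw [hc, zero_sub, abs_neg]
  have := dist_triangle_left (c 0) (c t) x
  linarith [le_abs_self t]

lemma exists_isBusemannOf (hc : IsGeodesicLine c) : ∃ b : X → ℝ, IsBusemannOf c b :=
  ⟨fun x => ⨅ t, dist x (c t) - t, fun x =>
    tendsto_atTop_ciInf (hc.antitone_dist_sub x)
      ⟨-dist x (c 0), by rintro _ ⟨t, rfl⟩; exact hc.neg_dist_le_dist_sub x t⟩⟩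

lemma busemann_add_nonneg (hc : IsGeodesicLine c) {bp bm : X → ℝ} (hbp : IsBusemannOf c bp)
    (hbm : IsBusemannOf (fun t => c (-t)) bm) (x : X) : 0 ≤ bp x + bm x := by
  refine ge_of_tendsto ((hbp x).add (hbm x)) ?_
  filter_upwards [eventually_ge_atTop 0] with t ht
  have hdist : dist (c t) (c (-t)) = 2 * t := by
    rw [hc, sub_neg_eq_add, ← two_mul, abs_of_nonneg (by linarith)]
  have := dist_triangle_left (c t) (c (-t)) x
  linarith

end IsGeodesicLine

lemma ParallelLines.comp_neg {X : Type*} [MetricSpace X] {c₀ c₁ : ℝ → X}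
    (h : ParallelLines c₀ c₁) : ParallelLines (fun t => c₀ (-t)) (fun t => c₁ (-t)) := by
  constructor
  · simpa [Function.comp_def, abs_neg] using h.2.comp tendsto_neg_atTop_atBot
  · simpa [Function.comp_def, abs_neg] using h.1.comp tendsto_neg_atBot_atTop

namespace Ptolemaic

variable {X : Type*} [MetricSpace X] {c c' : ℝ → X}

lemma dist_sub_add_dist_sub_mul_le (hPT : Ptolemaic X) (hc : IsGeodesicLine c)
    (hc' : IsGeodesicLine c') {s u : ℝ} (hsu : s ≤ u) :
    ((dist (c' s) (c u) - u) + (dist (c s) (c' u) - u) + 2 * s) * u ≤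
      dist (c s) (c' s) * dist (c u) (c' u)
        + (s ^ 2 - (dist (c' s) (c u) - u) * (dist (c s) (c' u) - u)) := by
  have hptol := hPT (c s) (c' u) (c' s) (c u)
  rw [hc, hc', abs_sub_comm s u, abs_of_nonneg (sub_nonneg.2 hsu), dist_comm (c' u) (c u)]
    at hptol
  nlinarith [hptol]

lemma busemann_add_busemann_le (hPT : Ptolemaic X) (hc : IsGeodesicLine c)
    (hc' : IsGeodesicLine c')
    (hpar : Tendsto (fun t => dist (c t) (c' t) / |t|) atTop (𝓝 0))
    {b b' : X → ℝ} (hb : IsBusemannOf c b) (hb' : IsBusemannOf c' b') (s : ℝ) :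
    b (c' s) + b' (c s) + 2 * s ≤ 0 := by
  set A : ℝ → ℝ := fun u => dist (c' s) (c u) - u
  set B : ℝ → ℝ := fun u => dist (c s) (c' u) - u
  have hsublinear : Tendsto (fun u => dist (c u) (c' u) / u) atTop (𝓝 0) := by
    refine hpar.congr' ?_
    filter_upwards [eventually_gt_atTop 0] with u hu
    rw [abs_of_pos hu]
  have herror : Tendsto (fun u => dist (c s) (c' s) * (dist (c u) (c' u) / u)
      + (s ^ 2 - A u * B u) * u⁻¹) atTop (𝓝 0) := by
    simpa using (tendsto_const_nhds.mul hsublinear).add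
      ((tendsto_const_nhds.sub ((hb (c' s)).mul (hb' (c s)))).mul tendsto_inv_atTop_zero)
  refine le_of_tendsto_of_tendsto (((hb (c' s)).add (hb' (c s))).add tendsto_const_nhds)
    herror ?_
  filter_upwards [eventually_ge_atTop s, eventually_gt_atTop 0] with u hsu hu
  rw [mul_div_assoc', ← div_eq_mul_inv, ← add_div, le_div_iff₀ hu]
  exact hPT.dist_sub_add_dist_sub_mul_le hc hc' hsu

end Ptolemaic

/-- **The sum of the two Busemann functions of a line vanishes on every
parallel line.** -/
theorem busemann_sum_zero_on_parallel_line
    (X : Type*) [MetricSpace X] (hPT : Ptolemaic X)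
    (c c' : ℝ → X) (hc : IsGeodesicLine c) (hc' : IsGeodesicLine c')
    (hpar : ParallelLines c c')
    (bp bm : X → ℝ)
    (hbp : IsBusemannOf (fun t => c t) bp)
    (hbm : IsBusemannOf (fun t => c (-t)) bm) :
    ∀ s : ℝ, bp (c' s) + bm (c' s) = 0 := by
  intro s
  obtain ⟨bp', hbp'⟩ := hc'.exists_isBusemannOf
  obtain ⟨bm', hbm'⟩ := hc'.comp_neg.exists_isBusemannOf
  have hfwd := hPT.busemann_add_busemann_le hc hc' hpar.1 hbp hbp' s
  have hbwd :=
    hPT.busemann_add_busemann_le hc.comp_neg hc'.comp_neg hpar.comp_neg.1 hbm hbm' (-s)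
  simp only [neg_neg] at hbwd
  have hlow := hc.busemann_add_nonneg hbp hbm (c' s)
  have hlow' := hc'.busemann_add_nonneg hbp' hbm' (c s)
  linarith
end

section
/- Let X be a geodesic ptolemaic metric space and let c : [0,∞) → X be a geodesic ray. Then the Busemann function b_c is convex: for every geodesic γ : [0,1] → X, the function t ↦ b_c(γ(t)) is convex on [0,1]. -/
/-!
If `m` lies on a geodesic from `x` to `y` with `d(x,m) = t·d(x,y)` and `d(m,y) = s·d(x,y)`, the
Ptolemy inequality `d(x,y)·d(m,p) ≤ d(x,m)·d(y,p) + d(x,p)·d(y,m)` divided by `d(x,y)` reads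
`d(m,p) ≤ s·d(x,p) + t·d(y,p)`: the distance to any point `p` is convex along geodesics. The
Busemann function is the pointwise limit of the convex functions `d(·, c r) - r`, and pointwise
limits of convex functions are convex.
-/

open Metric Set Filter Topology

/-- A metric space is geodesic if every pair of points is joined by a geodesic. -/
def GeodesicMetricSpace (X : Type*) [MetricSpace X] : Prop :=
  ∀ x y : X, ∃ c : ℝ → X, c 0 = x ∧ c 1 = y ∧
    ∀ s ∈ Set.Icc (0:ℝ) 1, ∀ t ∈ Set.Icc (0:ℝ) 1,
      dist (c s) (c t) = dist x y * |s - t|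

/-- A unit-speed geodesic ray: an isometric embedding of `[0,∞)`. -/
def IsGeodesicRay {X : Type*} [MetricSpace X] (c : ℝ → X) : Prop :=
  ∀ s t : ℝ, 0 ≤ s → 0 ≤ t → dist (c s) (c t) = |s - t|

theorem ConvexOn.of_tendsto {ι E : Type*} [AddCommMonoid E] [SMul ℝ E] {l : Filter ι}
    [l.NeBot] {s : Set E} {F : ι → E → ℝ} {f : E → ℝ} (hF : ∀ᶠ i in l, ConvexOn ℝ s (F i))
    (hlim : ∀ x ∈ s, Tendsto (fun i => F i x) l (𝓝 (f x))) : ConvexOn ℝ s f := by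
  obtain ⟨i, hi⟩ := hF.exists
  refine ⟨hi.1, fun x hx y hy a b ha hb hab => ?_⟩
  exact le_of_tendsto_of_tendsto (hlim _ (hi.1 hx hy ha hb hab))
    (((hlim x hx).const_smul a).add ((hlim y hy).const_smul b))
    (hF.mono fun j hj => hj.2 hx hy ha hb hab)

theorem Ptolemaic.dist_le_of_dist_eq_mul {X : Type*} [MetricSpace X] (hPT : Ptolemaic X)
    {x y m : X} {s t : ℝ} (hst : s + t = 1) (hxm : dist x m = t * dist x y)
    (hym : dist y m = s * dist x y) (p : X) :
    dist m p ≤ s * dist x p + t * dist y p := by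
  rcases (dist_nonneg (x := x) (y := y)).eq_or_lt' with hxy | hxy
  · have hmx : m = x := (dist_eq_zero.1 (by rw [hxm, hxy, mul_zero])).symm
    have hyx : y = x := dist_eq_zero.1 (by rw [dist_comm, hxy])
    rw [hmx, hyx, ← add_mul, hst, one_mul]
  · have h := hPT x y m p
    rw [hxm, hym] at h
    refine le_of_mul_le_mul_left ?_ hxy
    linarith

theorem Ptolemaic.convexOn_dist_comp_geodesic {X : Type*} [MetricSpace X] (hPT : Ptolemaic X)
    {γ : ℝ → X} {l : ℝ}
    (hγ : ∀ s ∈ Icc (0:ℝ) 1, ∀ t ∈ Icc (0:ℝ) 1, dist (γ s) (γ t) = l * |s - t|) (p : X) :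
    ConvexOn ℝ (Icc (0:ℝ) 1) (fun t => dist (γ t) p) := by
  refine ⟨convex_Icc 0 1, fun x hx y hy s t hs ht hst => ?_⟩
  have hm : s • x + t • y ∈ Icc (0:ℝ) 1 := convex_Icc 0 1 hx hy hs ht hst
  simp only [smul_eq_mul] at hm ⊢
  refine hPT.dist_le_of_dist_eq_mul hst ?_ ?_ p
  · rw [hγ x hx _ hm, hγ x hx y hy, show x - (s * x + t * y) = t * (x - y) by
      linear_combination (-x) * hst, abs_mul, abs_of_nonneg ht]
    ring
  · rw [hγ y hy _ hm, hγ x hx y hy, show y - (s * x + t * y) = s * (y - x) by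
      linear_combination (-y) * hst, abs_mul, abs_of_nonneg hs, abs_sub_comm]
    ring

theorem busemann_convex_general
    (X : Type*) [MetricSpace X]
    (hPT : Ptolemaic X)
    (c : ℝ → X)
    (b : X → ℝ) (hb : IsBusemannOf c b)
    (γ : ℝ → X) (l : ℝ)
    (hγ : ∀ s ∈ Set.Icc (0:ℝ) 1, ∀ t ∈ Set.Icc (0:ℝ) 1,
      dist (γ s) (γ t) = l * |s - t|) :
    ConvexOn ℝ (Set.Icc (0:ℝ) 1) (fun t => b (γ t)) := by
  refine ConvexOn.of_tendsto (l := atTop) (F := fun r t => dist (γ t) (c r) - r)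
    (Eventually.of_forall fun r => ?_) fun t _ => hb (γ t)
  exact (hPT.convexOn_dist_comp_geodesic hγ (c r)).sub (concaveOn_const r (convex_Icc 0 1))

/-- **The Busemann function of a ray in a geodesic PT space is convex.** -/
theorem busemann_convex
    (X : Type*) [MetricSpace X]
    (hPT : Ptolemaic X) (hgeo : GeodesicMetricSpace X)
    (c : ℝ → X) (hc : IsGeodesicRay c)
    (b : X → ℝ) (hb : IsBusemannOf c b)
    (γ : ℝ → X) (l : ℝ) (hl : 0 ≤ l)
    (hγ : ∀ s ∈ Set.Icc (0:ℝ) 1, ∀ t ∈ Set.Icc (0:ℝ) 1,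
      dist (γ s) (γ t) = l * |s - t|) :
    ConvexOn ℝ (Set.Icc (0:ℝ) 1) (fun t => b (γ t)) :=
  busemann_convex_general X hPT c b hb γ l hγ
end
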